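/- arXiv:1904.01122 — 4 statements merged into one kernel-verified Lean document; each statement's English description precedes it below -/
import Mathlib

section
/- Let U ⊆ ℝ³ be open and let η : U → ℝ³ be twice continuously differentiable such that its Jacobian matrix Dη (with entries [Dη]^i_j = ∂_j η^i) is invertible at every point of U. Set 𝒜 = [Dη]^{-1} (entries 𝒜^k_i), 𝒥 = det Dη, and a = 𝒥𝒜. Then the Piola identity holds: for each i ∈ {1,2,3}, Σ_{k=1}^{3} ∂_k (a^k_i) = 0 everywhere on U. -/
/-- Partial derivative `∂_j f` of a scalar function on `ℝ³`. -/
noncomputable def pd (j : Fin 3) (f : (Fin 3 → ℝ) → ℝ) (x : Fin 3 → ℝ) : ℝ :=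
  fderiv ℝ f x (Pi.single j 1)

/-- Jacobian matrix `Dη`, entries `[Dη]^i_j = ∂_j η^i`. -/
noncomputable def jacM (η : (Fin 3 → ℝ) → (Fin 3 → ℝ)) (x : Fin 3 → ℝ) :
    Matrix (Fin 3) (Fin 3) ℝ :=
  Matrix.of fun i j => pd j (fun y => η y i) x

/-!
Where `Dη` is invertible, `𝒥 𝒜` is the adjugate of `Dη`, and column `i` of the adjugate of a
`3 × 3` matrix is the cross product of rows `i + 1` and `i + 2`. So `a^·_i = ∇η^{i+1} × ∇η^{i+2}`,
and `div (∇f × ∇g) = ∇g · curl ∇f - ∇f · curl ∇g` vanishes because second derivatives of `C²`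
functions commute.
-/

open Matrix Topology

theorem Matrix.det_mul_inv_apply {n R : Type*} [Fintype n] [DecidableEq n] [CommRing R]
    {A : Matrix n n R} (hA : IsUnit A) (k i : n) : A.det * A⁻¹ k i = A.adjugate k i := by
  rw [inv_def, smul_apply, smul_eq_mul, ← mul_assoc,
    Ring.mul_inverse_cancel _ ((isUnit_iff_isUnit_det A).1 hA), one_mul]

theorem Matrix.adjugate_fin_three_apply_eq_cross {R : Type*} [CommRing R]
    (A : Matrix (Fin 3) (Fin 3) R) (k i : Fin 3) :
    A.adjugate k i = (A (i + 1) ⨯₃ A (i + 2)) k := by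
  rw [adjugate_fin_three, cross_apply]
  fin_cases k <;> fin_cases i <;> simp <;> ring

noncomputable def grad (f : (Fin 3 → ℝ) → ℝ) (x : Fin 3 → ℝ) : Fin 3 → ℝ :=
  fun j => pd j f x

theorem Filter.EventuallyEq.pd_eq {f g : (Fin 3 → ℝ) → ℝ} {x : Fin 3 → ℝ} (h : f =ᶠ[𝓝 x] g)
    (j : Fin 3) : pd j f x = pd j g x := by
  rw [pd, pd, h.fderiv_eq]

theorem pd_mul_sub_mul {p q r s : (Fin 3 → ℝ) → ℝ} {x : Fin 3 → ℝ}
    (hp : DifferentiableAt ℝ p x) (hq : DifferentiableAt ℝ q x)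
    (hr : DifferentiableAt ℝ r x) (hs : DifferentiableAt ℝ s x) (k : Fin 3) :
    pd k (fun y => p y * q y - r y * s y) x =
      pd k p x * q x + p x * pd k q x - (pd k r x * s x + r x * pd k s x) := by
  unfold pd
  rw [fderiv_fun_sub (f := fun y => p y * q y) (g := fun y => r y * s y) (hp.mul hq) (hr.mul hs),
    fderiv_fun_mul hp hq, fderiv_fun_mul hr hs]
  simp only [_root_.sub_apply, _root_.add_apply, _root_.smul_apply, smul_eq_mul]
  ring

section SecondDerivatives

variable {f : (Fin 3 → ℝ) → ℝ} {x : Fin 3 → ℝ}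

theorem ContDiffAt.differentiableAt_pd (hf : ContDiffAt ℝ 2 f x) (j : Fin 3) :
    DifferentiableAt ℝ (pd j f) x :=
  ((ContinuousLinearMap.apply ℝ ℝ (Pi.single j 1 : Fin 3 → ℝ)).contDiff.contDiffAt.comp x
    (hf.fderiv_right (m := 1) one_add_one_eq_two.le)).differentiableAt one_ne_zero

theorem ContDiffAt.pd_pd_comm (hf : ContDiffAt ℝ 2 f x) (i j : Fin 3) :
    pd i (pd j f) x = pd j (pd i f) x := by
  have hd : DifferentiableAt ℝ (fderiv ℝ f) x :=
    (hf.fderiv_right (m := 1) one_add_one_eq_two.le).differentiableAt one_ne_zero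
  have hpd : ∀ v w : Fin 3 → ℝ,
      fderiv ℝ (fun y => fderiv ℝ f y v) x w = fderiv ℝ (fderiv ℝ f) x w v := fun v w => by
    simp [fderiv_clm_apply hd (differentiableAt_const v)]
  unfold pd
  rw [hpd, hf.isSymmSndFDerivAt (by simp), ← hpd]

end SecondDerivatives

theorem sum_pd_cross_grad_eq_zero {f g : (Fin 3 → ℝ) → ℝ} {x : Fin 3 → ℝ}
    (hf : ContDiffAt ℝ 2 f x) (hg : ContDiffAt ℝ 2 g x) :
    ∑ k : Fin 3, pd k (fun y => (grad f y ⨯₃ grad g y) k) x = 0 := by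
  have hf' := hf.differentiableAt_pd
  have hg' := hg.differentiableAt_pd
  simp only [Fin.sum_univ_three, cross_apply, grad, Matrix.cons_val_zero, Matrix.cons_val_one,
    Matrix.cons_val_two, Matrix.tail_cons, Matrix.head_cons]
  rw [pd_mul_sub_mul (hf' 1) (hg' 2) (hf' 2) (hg' 1),
    pd_mul_sub_mul (hf' 2) (hg' 0) (hf' 0) (hg' 2), pd_mul_sub_mul (hf' 0) (hg' 1) (hf' 1) (hg' 0)]
  linear_combination pd 2 g x * hf.pd_pd_comm 0 1 + pd 1 g x * hf.pd_pd_comm 2 0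
    + pd 0 g x * hf.pd_pd_comm 1 2 - pd 2 f x * hg.pd_pd_comm 0 1 - pd 1 f x * hg.pd_pd_comm 2 0
    - pd 0 f x * hg.pd_pd_comm 1 2

/-- **Piola identity.**  If `η : U → ℝ³` is `C²` on an open set `U ⊆ ℝ³` with everywhere
invertible Jacobian, and `a = 𝒥 𝒜` where `𝒜 = [Dη]⁻¹`, `𝒥 = det Dη`, then
`Σ_k ∂_k (a^k_i) = 0` on `U` for each `i`. -/
theorem piola_identity (U : Set (Fin 3 → ℝ)) (hU : IsOpen U)
    (η : (Fin 3 → ℝ) → (Fin 3 → ℝ)) (hη : ContDiffOn ℝ 2 η U)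
    (hinv : ∀ x ∈ U, IsUnit (jacM η x)) :
    ∀ i : Fin 3, ∀ x ∈ U,
      (∑ k : Fin 3, pd k (fun y => (jacM η y).det * ((jacM η y)⁻¹ k i)) x) = 0 := by
  intro i x hx
  have hcoord : ∀ a, ContDiffAt ℝ 2 (fun y => η y a) x := fun a =>
    (contDiff_apply ℝ ℝ a).contDiffAt.comp x (hη.contDiffAt (hU.mem_nhds hx))
  have hcof : ∀ k, (fun y => (jacM η y).det * ((jacM η y)⁻¹ k i)) =ᶠ[𝓝 x]
      fun y => (grad (fun z => η z (i + 1)) y ⨯₃ grad (fun z => η z (i + 2)) y) k := by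
    intro k
    filter_upwards [hU.mem_nhds hx] with y hy
    rw [det_mul_inv_apply (hinv y hy), adjugate_fin_three_apply_eq_cross]
    rfl
  simp only [(hcof _).pd_eq]
  exact sum_pd_cross_grad_eq_zero (hcoord _) (hcoord _)
end

section
/- Let α > 0, β = 3/α, let Ω ⊆ ℝ³, and let w : Ω → [0,∞) be continuously differentiable. Let η : [0,∞) × Ω → ℝ³ be twice continuously differentiable such that for each t the spatial Jacobian ℳ = Dη is invertible with 𝒥 = det Dη > 0, and set 𝒜 = ℳ^{-1}. Suppose that for i = 1,2,3, w^α ∂_{tt}η^i + Σ_k ∂_k( w^{1+α} 𝒜^k_i 𝒥^{-1/α} ) = 0 on (0,∞) × Ω. Define the rescaled variables τ = log(1+t) and ζ(τ,x) = e^{-τ} η(e^τ − 1, x), and let 𝒜̃ = [Dζ]^{-1} and 𝒥̃ = det Dζ (spatial Jacobian of ζ). Then ζ satisfies, for i = 1,2,3 and all τ > 0, w^α e^{βτ}( ∂_{ττ}ζ^i + ∂_τ ζ^i ) + Σ_k ∂_k( w^{1+α} 𝒜̃^k_i 𝒥̃^{-1/α} ) = 0 on Ω. -/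
open Real Set Filter Topology

theorem Matrix.inv_smul_of_ne_zero {n K : Type*} [Fintype n] [DecidableEq n] [Field K]
    {c : K} (hc : c ≠ 0) (A : Matrix n n K) : (c • A)⁻¹ = c⁻¹ • A⁻¹ := by
  by_cases hA : IsUnit A.det
  · exact Matrix.inv_smul' (A := A) (Units.mk0 c hc) hA
  · have hcA : ¬IsUnit (c • A).det := by
      simpa [Matrix.det_smul, isUnit_iff_ne_zero, hc] using hA
    rw [Matrix.nonsing_inv_apply_not_isUnit _ hA, Matrix.nonsing_inv_apply_not_isUnit _ hcA,
      smul_zero]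

theorem Real.mul_rpow_of_pos_left {a : ℝ} (ha : 0 < a) (b p : ℝ) :
    (a * b) ^ p = a ^ p * b ^ p := by
  rcases le_or_gt 0 b with hb | hb
  · exact mul_rpow ha.le hb
  · rw [rpow_def_of_neg (mul_neg_of_pos_of_neg ha hb), rpow_def_of_neg hb, rpow_def_of_pos ha,
      log_mul ha.ne' hb.ne, add_mul, exp_add]
    ring

theorem hasDerivAt_exp_neg_mul_comp_exp_sub_one {f : ℝ → ℝ} {s : ℝ}
    (hf : DifferentiableAt ℝ f (exp s - 1)) :
    HasDerivAt (fun s => exp (-s) * f (exp s - 1))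
      (-(exp (-s) * f (exp s - 1)) + deriv f (exp s - 1)) s := by
  have h : HasDerivAt (fun s => exp (-s) * f (exp s - 1))
      (exp (-s) * -1 * f (exp s - 1) + exp (-s) * (deriv f (exp s - 1) * exp s)) s :=
    (hasDerivAt_neg s).exp.mul (hf.hasDerivAt.comp s ((hasDerivAt_exp s).sub_const 1))
  refine h.congr_deriv ?_
  rw [mul_left_comm, ← exp_add, neg_add_cancel, exp_zero]
  ring

theorem deriv_deriv_add_deriv_exp_neg_mul_comp_exp_sub_one {f : ℝ → ℝ} {τ : ℝ}
    (hf : ∀ᶠ u in 𝓝 (exp τ - 1), DifferentiableAt ℝ f u)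
    (hf' : DifferentiableAt ℝ (deriv f) (exp τ - 1)) :
    deriv (deriv fun s => exp (-s) * f (exp s - 1)) τ
        + deriv (fun s => exp (-s) * f (exp s - 1)) τ
      = exp τ * deriv (deriv f) (exp τ - 1) := by
  have hφ : HasDerivAt (fun s => exp s - 1) (exp τ) τ := (hasDerivAt_exp τ).sub_const 1
  have hderiv : deriv (fun s => exp (-s) * f (exp s - 1))
      =ᶠ[𝓝 τ] fun s => -(exp (-s) * f (exp s - 1)) + deriv f (exp s - 1) :=
    (hφ.continuousAt.eventually hf).mono fun s hs =>
      (hasDerivAt_exp_neg_mul_comp_exp_sub_one hs).deriv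
  have hfirst := hasDerivAt_exp_neg_mul_comp_exp_sub_one hf.self_of_nhds
  have hsecond : HasDerivAt (fun s => -(exp (-s) * f (exp s - 1)) + deriv f (exp s - 1))
      (-(-(exp (-τ) * f (exp τ - 1)) + deriv f (exp τ - 1))
        + deriv (deriv f) (exp τ - 1) * exp τ) τ :=
    hfirst.neg.add (HasDerivAt.comp τ (h₂ := deriv f) hf'.hasDerivAt hφ)
  rw [hderiv.deriv_eq, hsecond.deriv, hfirst.deriv]
  ring

theorem pd_const_mul (j : Fin 3) (c : ℝ) (f : (Fin 3 → ℝ) → ℝ) (x : Fin 3 → ℝ) :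
    pd j (fun y => c * f y) x = c * pd j f x := by
  change fderiv ℝ (c • f) x _ = _
  rw [fderiv_const_smul_field]
  rfl

theorem jacM_const_smul (c : ℝ) (η : (Fin 3 → ℝ) → (Fin 3 → ℝ)) (x : Fin 3 → ℝ) :
    jacM (c • η) x = c • jacM η x := by
  ext i j
  exact pd_const_mul j c (fun y => η y i) x

theorem pd_flux_const_smul (a p : ℝ) (w : (Fin 3 → ℝ) → ℝ) (η : (Fin 3 → ℝ) → (Fin 3 → ℝ))
    {c : ℝ} (hc : 0 < c) (k i : Fin 3) (x : Fin 3 → ℝ) :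
    pd k (fun y => w y ^ a * (jacM (c • η) y)⁻¹ k i * (jacM (c • η) y).det ^ p) x
      = c⁻¹ * (c ^ 3) ^ p
          * pd k (fun y => w y ^ a * (jacM η y)⁻¹ k i * (jacM η y).det ^ p) x := by
  rw [← pd_const_mul]
  congr 1
  funext y
  rw [jacM_const_smul, Matrix.inv_smul_of_ne_zero hc.ne', Matrix.det_smul, Fintype.card_fin,
    mul_rpow_of_pos_left (pow_pos hc 3)]
  simp only [Matrix.smul_apply, smul_eq_mul]
  ring

theorem rescaled_euler_equation_general
    (α β : ℝ) (hβ : β = 3 / α)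
    (Ω : Set (Fin 3 → ℝ))
    (w : (Fin 3 → ℝ) → ℝ)
    (η : ℝ → (Fin 3 → ℝ) → (Fin 3 → ℝ))
    (hη : ContDiffOn ℝ 2 (fun p : ℝ × (Fin 3 → ℝ) => η p.1 p.2) (Set.Ici 0 ×ˢ Ω))
    (heq : ∀ t ∈ Set.Ioi (0:ℝ), ∀ x ∈ Ω, ∀ i : Fin 3,
      w x ^ α * deriv (fun s => deriv (fun u => η u x i) s) t
        + ∑ k : Fin 3, pd k
            (fun y => w y ^ (1 + α) * ((jacM (η t) y)⁻¹ k i)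
              * ((jacM (η t) y).det) ^ (-1 / α)) x = 0)
    (ζ : ℝ → (Fin 3 → ℝ) → (Fin 3 → ℝ))
    (hζ : ∀ τ x, ζ τ x = Real.exp (-τ) • η (Real.exp τ - 1) x) :
    ∀ τ ∈ Set.Ioi (0:ℝ), ∀ x ∈ Ω, ∀ i : Fin 3,
      w x ^ α * Real.exp (β * τ)
          * (deriv (fun s => deriv (fun u => ζ u x i) s) τ + deriv (fun s => ζ s x i) τ)
        + ∑ k : Fin 3, pd k
            (fun y => w y ^ (1 + α) * ((jacM (ζ τ) y)⁻¹ k i)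
              * ((jacM (ζ τ) y).det) ^ (-1 / α)) x = 0 := by
  intro τ hτ x hx i
  have ht : exp τ - 1 ∈ Ioi (0 : ℝ) := sub_pos.2 (one_lt_exp_iff.2 hτ)
  have hslice : ContDiffOn ℝ (1 + 1) (fun u => η u x i) (Ioi 0) :=
    (contDiffOn_pi.1 (hη.comp (contDiffOn_id.prodMk contDiffOn_const)
      fun u hu => ⟨hu, hx⟩) i).mono Ioi_subset_Ici_self
  obtain ⟨hdiff, -, hderiv⟩ := (contDiffOn_succ_iff_deriv_of_isOpen isOpen_Ioi).1 hslice
  have htime := deriv_deriv_add_deriv_exp_neg_mul_comp_exp_sub_one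
    (eventually_of_mem (isOpen_Ioi.mem_nhds ht) fun u hu =>
      hdiff.differentiableAt (isOpen_Ioi.mem_nhds hu))
    ((hderiv.differentiableOn one_ne_zero).differentiableAt (isOpen_Ioi.mem_nhds ht))
  have hscale : (exp (-τ))⁻¹ * (exp (-τ) ^ 3) ^ (-1 / α) = exp τ * exp (β * τ) := by
    rw [← exp_neg, neg_neg, ← exp_nat_mul, ← exp_mul, hβ]
    congr 2
    push_cast
    ring
  have hζx : (fun s => ζ s x i) = fun s => exp (-s) * η (exp s - 1) x i :=
    funext fun s => by simp [hζ]
  rw [show ζ τ = exp (-τ) • η (exp τ - 1) from funext (hζ τ)]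
  simp only [pd_flux_const_smul _ _ _ _ (exp_pos _), hscale, ← Finset.mul_sum]
  rw [hζx, htime]
  linear_combination exp τ * exp (β * τ) * heq _ ht x hx i

/-- **Self-similar rescaling of the Lagrangian Euler equations.**  If `η` solves
`w^α ∂_tt η^i + ∂_k (w^{1+α} 𝒜^k_i 𝒥^{-1/α}) = 0`, then the rescaled unknown
`ζ(τ,x) = e^{-τ} η(e^τ - 1, x)` (with `τ = log(1+t)`) solves
`w^α e^{βτ} (∂_ττ ζ^i + ∂_τ ζ^i) + ∂_k (w^{1+α} 𝒜̃^k_i 𝒥̃^{-1/α}) = 0`, where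
`β = 3/α` and `𝒜̃, 𝒥̃` are built from the spatial Jacobian of `ζ`. -/
theorem rescaled_euler_equation
    (α β : ℝ) (hα : 0 < α) (hβ : β = 3 / α)
    (Ω : Set (Fin 3 → ℝ))
    (w : (Fin 3 → ℝ) → ℝ) (hw : ContDiffOn ℝ 1 w Ω) (hwnn : ∀ x ∈ Ω, 0 ≤ w x)
    (η : ℝ → (Fin 3 → ℝ) → (Fin 3 → ℝ))
    (hη : ContDiffOn ℝ 2 (fun p : ℝ × (Fin 3 → ℝ) => η p.1 p.2) (Set.Ici 0 ×ˢ Ω))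
    (hinv : ∀ t ∈ Set.Ici (0:ℝ), ∀ x ∈ Ω, IsUnit (jacM (η t) x))
    (hJpos : ∀ t ∈ Set.Ici (0:ℝ), ∀ x ∈ Ω, 0 < (jacM (η t) x).det)
    (heq : ∀ t ∈ Set.Ioi (0:ℝ), ∀ x ∈ Ω, ∀ i : Fin 3,
      w x ^ α * deriv (fun s => deriv (fun u => η u x i) s) t
        + ∑ k : Fin 3, pd k
            (fun y => w y ^ (1 + α) * ((jacM (η t) y)⁻¹ k i)
              * ((jacM (η t) y).det) ^ (-1 / α)) x = 0)
    (ζ : ℝ → (Fin 3 → ℝ) → (Fin 3 → ℝ))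
    (hζ : ∀ τ x, ζ τ x = Real.exp (-τ) • η (Real.exp τ - 1) x) :
    ∀ τ ∈ Set.Ioi (0:ℝ), ∀ x ∈ Ω, ∀ i : Fin 3,
      w x ^ α * Real.exp (β * τ)
          * (deriv (fun s => deriv (fun u => ζ u x i) s) τ + deriv (fun s => ζ s x i) τ)
        + ∑ k : Fin 3, pd k
            (fun y => w y ^ (1 + α) * ((jacM (ζ τ) y)⁻¹ k i)
              * ((jacM (ζ τ) y).det) ^ (-1 / α)) x = 0 :=
  rescaled_euler_equation_general α β hβ Ω w η hη heq ζ hζ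
end

section
/- Let U ⊆ ℝ³ ∖ {0} be open, let Q : U → ℝ^{3×3} be a twice continuously differentiable matrix field (entries Q^k_i), let q > 0, and let W : U → (0,∞) be twice continuously differentiable and radially symmetric, so that ∂_k W = (x_k/r) ∂_r W where r = |x| and ∂_r = Σ_j (x_j/r) ∂_j is the radial directional derivative. Then for each i, j, l ∈ {1,2,3} the following two identities hold on U (with repeated indices k and l summed from 1 to 3): (1) Λ( W^{-q} ∂_k( W^{1+q} Q^k_i ) ) = W^{-(1+q)} ∂_k( W^{2+q} Λ Q^k_i ) + 𝒞^{q+1}_i(Q), where 𝒞^{q+1}_i(Q) = ∂_r W · (x_l/r) ∂̸_{lk} Q^k_i − W ∂_k Q^k_i + (1+q) Q^k_i Λ ∂_k W; (2) ∂̸_{jl}( W^{-q} ∂_k( W^{1+q} Q^k_i ) ) = W^{-q} ∂_k( W^{1+q} ∂̸_{jl} Q^k_i ) + 𝒟^q_i(j,l,Q), where 𝒟^q_i(j,l,Q) = W [∂̸_{jl}, ∂_k] Q^k_i + (1+q) Q^k_i ∂̸_{jl} ∂_k W + ∂̸_{jl} W · ∂_k Q^k_i. -/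
/-- Partial derivative `∂_j f` of a scalar function on `ℝ³` (as an operator). -/
noncomputable def pdF (j : Fin 3) (f : (Fin 3 → ℝ) → ℝ) : (Fin 3 → ℝ) → ℝ :=
  fun x => fderiv ℝ f x (Pi.single j 1)

/-- Angular derivative `∂̸_ij = x_i ∂_j − x_j ∂_i`. -/
noncomputable def angF (i j : Fin 3) (f : (Fin 3 → ℝ) → ℝ) : (Fin 3 → ℝ) → ℝ :=
  fun x => x i * pdF j f x - x j * pdF i f x

/-- Radial derivative `Λ = x₁∂₁ + x₂∂₂ + x₃∂₃ = r ∂_r`. -/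
noncomputable def radF (f : (Fin 3 → ℝ) → ℝ) : (Fin 3 → ℝ) → ℝ :=
  fun x => ∑ l : Fin 3, x l * pdF l f x

/-- Euclidean radius `r = |x|`. -/
noncomputable def rad (x : Fin 3 → ℝ) : ℝ := Real.sqrt (∑ l : Fin 3, x l ^ 2)

/-- Radial directional derivative `∂_r = Σ_j (x_j/r) ∂_j`. -/
noncomputable def rdir (f : (Fin 3 → ℝ) → ℝ) : (Fin 3 → ℝ) → ℝ :=
  fun x => ∑ j : Fin 3, (x j / rad x) * pdF j f x

/-! Where `W > 0` the weighted divergence expands as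
`W^{-q} ∂_k(W^{1+q} Q^k_i) = (1+q) ∂_kW Q^k_i + W ∂_kQ^k_i`, and both identities follow by
differentiating this expansion with the Leibniz rule. For `∂̸_{jl}` nothing more is needed. For `Λ`
one also uses `[∂_k, Λ] = ∂_k` (symmetry of second derivatives), and the leftover
`ΛW ∂_kQ^k_i − ∂_kW ΛQ^k_i` equals `∂_rW (x_l/r) ∂̸_{lk}Q^k_i` because `∇W = (x/r) ∂_rW`. -/

open Filter Topology

section PartialDerivatives

variable {f g : (Fin 3 → ℝ) → ℝ} {x : Fin 3 → ℝ}

lemma pdF_congr (h : f =ᶠ[𝓝 x] g) (m : Fin 3) : pdF m f x = pdF m g x := by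
  rw [pdF, pdF, h.fderiv_eq]

lemma pdF_add (hf : DifferentiableAt ℝ f x) (hg : DifferentiableAt ℝ g x) (m : Fin 3) :
    pdF m (fun y => f y + g y) x = pdF m f x + pdF m g x := by
  simp [pdF, fderiv_fun_add hf hg]

lemma pdF_mul (hf : DifferentiableAt ℝ f x) (hg : DifferentiableAt ℝ g x) (m : Fin 3) :
    pdF m (fun y => f y * g y) x = pdF m f x * g x + f x * pdF m g x := by
  simp only [pdF, fderiv_fun_mul hf hg, add_apply, smul_apply, smul_eq_mul]
  ring

lemma pdF_const_mul (hf : DifferentiableAt ℝ f x) (c : ℝ) (m : Fin 3) :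
    pdF m (fun y => c * f y) x = c * pdF m f x := by
  simp [pdF, fderiv_const_mul hf c]

lemma pdF_sum {F : Fin 3 → (Fin 3 → ℝ) → ℝ} (hF : ∀ k, DifferentiableAt ℝ (F k) x) (m : Fin 3) :
    pdF m (fun y => ∑ k, F k y) x = ∑ k, pdF m (F k) x := by
  simp [pdF, fderiv_fun_sum fun k _ => hF k]

lemma pdF_rpow (hf : DifferentiableAt ℝ f x) (h0 : f x ≠ 0) (p : ℝ) (m : Fin 3) :
    pdF m (fun y => f y ^ p) x = p * f x ^ (p - 1) * pdF m f x := by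
  simp [pdF, (hf.hasFDerivAt.rpow_const (p := p) (Or.inl h0)).fderiv]

lemma pdF_coord (l m : Fin 3) : pdF m (fun y => y l) x = if m = l then 1 else 0 := by
  simp [pdF, (hasFDerivAt_apply l x).fderiv, Pi.single_apply, eq_comm]

lemma differentiableAt_pdF (hf : ContDiffAt ℝ 2 f x) (m : Fin 3) :
    DifferentiableAt ℝ (pdF m f) x :=
  ((hf.fderiv_right (m := 1) (by norm_num)).differentiableAt one_ne_zero).clm_apply
    (differentiableAt_const _)

lemma pdF_comm (hf : ContDiffAt ℝ 2 f x) (m k : Fin 3) :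
    pdF m (pdF k f) x = pdF k (pdF m f) x := by
  have hdf : DifferentiableAt ℝ (fderiv ℝ f) x :=
    (hf.fderiv_right (m := 1) (by norm_num)).differentiableAt one_ne_zero
  have hpd : ∀ v w : Fin 3 → ℝ,
      fderiv ℝ (fun y => fderiv ℝ f y v) x w = fderiv ℝ (fderiv ℝ f) x w v := fun v w => by
    simp [fderiv_clm_apply hdf (differentiableAt_const v)]
  unfold pdF
  rw [hpd, hpd, hf.isSymmSndFDerivAt (by simp)]

end PartialDerivatives

section FirstOrderOperators

variable {f : (Fin 3 → ℝ) → ℝ} {x : Fin 3 → ℝ}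

lemma differentiableAt_radF (hf : ContDiffAt ℝ 2 f x) : DifferentiableAt ℝ (radF f) x :=
  DifferentiableAt.fun_sum fun l _ => (differentiableAt_apply l x).mul (differentiableAt_pdF hf l)

lemma differentiableAt_angF (hf : ContDiffAt ℝ 2 f x) (j l : Fin 3) :
    DifferentiableAt ℝ (angF j l f) x :=
  ((differentiableAt_apply j x).mul (differentiableAt_pdF hf l)).sub
    ((differentiableAt_apply l x).mul (differentiableAt_pdF hf j))

lemma pdF_radF (hf : ContDiffAt ℝ 2 f x) (k : Fin 3) :
    pdF k (radF f) x = pdF k f x + radF (pdF k f) x := by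
  have hterm : ∀ l, DifferentiableAt ℝ (fun y => y l * pdF l f y) x :=
    fun l => (differentiableAt_apply l x).mul (differentiableAt_pdF hf l)
  unfold radF
  rw [pdF_sum hterm]
  simp only [pdF_mul (differentiableAt_apply _ x) (differentiableAt_pdF hf _), pdF_coord,
    ite_mul, one_mul, zero_mul, Finset.sum_add_distrib, Finset.sum_ite_eq, Finset.mem_univ,
    if_true, pdF_comm hf k]

end FirstOrderOperators

section WeightedDivergence

variable {W f : (Fin 3 → ℝ) → ℝ} {F : Fin 3 → (Fin 3 → ℝ) → ℝ} {x : Fin 3 → ℝ} {s p : ℝ}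

lemma rpow_mul_pdF_rpow_mul (hW : DifferentiableAt ℝ W x) (hWpos : 0 < W x)
    (hf : DifferentiableAt ℝ f x) (hsp : s + p = 1) (k : Fin 3) :
    W x ^ s * pdF k (fun y => W y ^ p * f y) x = p * pdF k W x * f x + W x * pdF k f x := by
  have hprod : W x ^ s * W x ^ p = W x := by rw [← Real.rpow_add hWpos, hsp, Real.rpow_one]
  have hprod' : W x ^ s * W x ^ (p - 1) = 1 := by
    rw [← Real.rpow_add hWpos, show s + (p - 1) = 0 by linarith, Real.rpow_zero]
  rw [pdF_mul (hW.rpow_const (Or.inl hWpos.ne')) hf, pdF_rpow hW hWpos.ne']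
  linear_combination (p * pdF k W x * f x) * hprod' + pdF k f x * hprod

lemma rpow_mul_sum_pdF_rpow_mul (hW : DifferentiableAt ℝ W x) (hWpos : 0 < W x)
    (hF : ∀ k, DifferentiableAt ℝ (F k) x) (hsp : s + p = 1) :
    W x ^ s * ∑ k, pdF k (fun y => W y ^ p * F k y) x
      = p * ∑ k, pdF k W x * F k x + W x * ∑ k, pdF k (F k) x := by
  simp only [Finset.mul_sum, rpow_mul_pdF_rpow_mul hW hWpos (hF _) hsp, mul_assoc,
    Finset.sum_add_distrib]

lemma pdF_rpow_mul_sum_pdF_rpow_mul (hW : ContDiffAt ℝ 2 W x) (hWpos : 0 < W x)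
    (hF : ∀ k, ContDiffAt ℝ 2 (F k) x) (hsp : s + p = 1) (m : Fin 3) :
    pdF m (fun y => W y ^ s * ∑ k, pdF k (fun z => W z ^ p * F k z) y) x
      = p * ∑ k, (pdF m (pdF k W) x * F k x + pdF k W x * pdF m (F k) x)
        + (pdF m W x * ∑ k, pdF k (F k) x + W x * ∑ k, pdF m (pdF k (F k)) x) := by
  have hnear : ∀ᶠ y in 𝓝 x, 0 < W y ∧ ContDiffAt ℝ 2 W y ∧ ∀ k, ContDiffAt ℝ 2 (F k) y :=
    (continuousAt_const.eventually_lt hW.continuousAt hWpos).and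
      ((hW.eventually (by simp)).and (eventually_all.2 fun k => (hF k).eventually (by simp)))
  have hexpand := hnear.mono fun y ⟨hWy, hWy', hFy⟩ =>
    rpow_mul_sum_pdF_rpow_mul (hWy'.differentiableAt two_ne_zero) hWy
      (fun k => (hFy k).differentiableAt two_ne_zero) hsp
  have hWd := hW.differentiableAt two_ne_zero
  have hFd := fun k => (hF k).differentiableAt two_ne_zero
  have hprod : ∀ k, DifferentiableAt ℝ (fun y => pdF k W y * F k y) x :=
    fun k => (differentiableAt_pdF hW k).mul (hFd k)
  have hdiv : DifferentiableAt ℝ (fun y => ∑ k, pdF k (F k) y) x :=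
    DifferentiableAt.fun_sum fun k _ => differentiableAt_pdF (hF k) k
  rw [pdF_congr hexpand, pdF_add ((DifferentiableAt.fun_sum fun k _ => hprod k).const_mul p)
    (hWd.fun_mul hdiv), pdF_const_mul (DifferentiableAt.fun_sum fun k _ => hprod k),
    pdF_mul hWd hdiv, pdF_sum hprod, pdF_sum fun k => differentiableAt_pdF (hF k) k]
  simp only [pdF_mul (differentiableAt_pdF hW _) (hFd _)]

end WeightedDivergence

section Commutators

variable {W : (Fin 3 → ℝ) → ℝ} {F : Fin 3 → (Fin 3 → ℝ) → ℝ} {x : Fin 3 → ℝ}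

lemma sum_radF_mul_pdF_sub_pdF_mul_radF_of_radial
    (hWrad : ∀ k, pdF k W x = x k / rad x * rdir W x) :
    ∑ k, (radF W x * pdF k (F k) x - pdF k W x * radF (F k) x)
      = rdir W x * ∑ l, ∑ k, x l / rad x * angF l k (F k) x := by
  simp only [radF, angF, hWrad, Fin.sum_univ_three]
  ring

lemma radF_rpow_mul_sum_pdF_rpow_mul (hW : ContDiffAt ℝ 2 W x) (hWpos : 0 < W x)
    (hWrad : ∀ k, pdF k W x = x k / rad x * rdir W x) (hF : ∀ k, ContDiffAt ℝ 2 (F k) x)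
    (q : ℝ) :
    radF (fun y => W y ^ (-q) * ∑ k, pdF k (fun z => W z ^ (1 + q) * F k z) y) x
      = W x ^ (-(1 + q)) * ∑ k, pdF k (fun y => W y ^ (2 + q) * radF (F k) y) x
        + (rdir W x * ∑ l, ∑ k, x l / rad x * angF l k (F k) x
          - W x * ∑ k, pdF k (F k) x + (1 + q) * ∑ k, F k x * radF (pdF k W) x) := by
  rw [rpow_mul_sum_pdF_rpow_mul (hW.differentiableAt two_ne_zero) hWpos
    (fun k => differentiableAt_radF (hF k)) (by ring),
    ← sum_radF_mul_pdF_sub_pdF_mul_radF_of_radial hWrad]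
  simp only [pdF_radF (hF _)]
  unfold radF
  simp only [pdF_rpow_mul_sum_pdF_rpow_mul hW hWpos hF (by ring : -q + (1 + q) = 1)]
  simp only [Fin.sum_univ_three]
  ring

lemma angF_rpow_mul_sum_pdF_rpow_mul (hW : ContDiffAt ℝ 2 W x) (hWpos : 0 < W x)
    (hF : ∀ k, ContDiffAt ℝ 2 (F k) x) (q : ℝ) (j l : Fin 3) :
    angF j l (fun y => W y ^ (-q) * ∑ k, pdF k (fun z => W z ^ (1 + q) * F k z) y) x
      = W x ^ (-q) * ∑ k, pdF k (fun y => W y ^ (1 + q) * angF j l (F k) y) x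
        + (W x * ∑ k, (angF j l (pdF k (F k)) x - pdF k (angF j l (F k)) x)
          + (1 + q) * ∑ k, F k x * angF j l (pdF k W) x
          + angF j l W x * ∑ k, pdF k (F k) x) := by
  rw [rpow_mul_sum_pdF_rpow_mul (hW.differentiableAt two_ne_zero) hWpos
    (fun k => differentiableAt_angF (hF k) j l) (by ring)]
  simp only [angF, pdF_rpow_mul_sum_pdF_rpow_mul hW hWpos hF (by ring : -q + (1 + q) = 1)]
  simp only [Fin.sum_univ_three]
  ring

end Commutators

theorem commutators_instead_of_expansion_general
    (U : Set (Fin 3 → ℝ)) (hU : IsOpen U)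
    (Q : (Fin 3 → ℝ) → Matrix (Fin 3) (Fin 3) ℝ)
    (hQ : ∀ k i : Fin 3, ContDiffOn ℝ 2 (fun x => Q x k i) U)
    (q : ℝ)
    (W : (Fin 3 → ℝ) → ℝ) (hW : ContDiffOn ℝ 2 W U) (hWpos : ∀ x ∈ U, 0 < W x)
    (hWrad : ∀ x ∈ U, ∀ k : Fin 3, pdF k W x = (x k / rad x) * rdir W x) :
    ∀ x ∈ U, ∀ i j l : Fin 3,
      (radF (fun y => W y ^ (-q) *
            ∑ k : Fin 3, pdF k (fun z => W z ^ (1 + q) * Q z k i) y) x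
        = W x ^ (-(1 + q)) *
            (∑ k : Fin 3, pdF k
              (fun y => W y ^ (2 + q) * radF (fun z => Q z k i) y) x)
          + (rdir W x *
              ∑ l' : Fin 3, ∑ k : Fin 3, (x l' / rad x) * angF l' k (fun z => Q z k i) x
            - W x * ∑ k : Fin 3, pdF k (fun z => Q z k i) x
            + (1 + q) * ∑ k : Fin 3, Q x k i * radF (pdF k W) x)) ∧
      (angF j l (fun y => W y ^ (-q) *
            ∑ k : Fin 3, pdF k (fun z => W z ^ (1 + q) * Q z k i) y) x
        = W x ^ (-q) *
            (∑ k : Fin 3, pdF k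
              (fun y => W y ^ (1 + q) * angF j l (fun z => Q z k i) y) x)
          + (W x * ∑ k : Fin 3,
                (angF j l (pdF k (fun z => Q z k i)) x
                  - pdF k (angF j l (fun z => Q z k i)) x)
            + (1 + q) * ∑ k : Fin 3, Q x k i * angF j l (pdF k W) x
            + angF j l W x * ∑ k : Fin 3, pdF k (fun z => Q z k i) x)) := by
  intro x hx i j l
  have hWx : ContDiffAt ℝ 2 W x := hW.contDiffAt (hU.mem_nhds hx)
  have hQx : ∀ k, ContDiffAt ℝ 2 (fun z => Q z k i) x :=
    fun k => (hQ k i).contDiffAt (hU.mem_nhds hx)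
  exact ⟨radF_rpow_mul_sum_pdF_rpow_mul hWx (hWpos x hx) (hWrad x hx) hQx q,
    angF_rpow_mul_sum_pdF_rpow_mul hWx (hWpos x hx) hQx q j l⟩

/-- **Commutation through weighted divergences** (Lemma on `𝒞` and `𝒟` remainders):
for a radially symmetric weight `W > 0` and a `C²` matrix field `Q` on an open
`U ⊆ ℝ³ ∖ {0}`, the radial and angular derivatives of `W^{-q} ∂_k (W^{1+q} Q^k_i)`
equal the corresponding weighted divergences of `ΛQ`, `∂̸Q` plus the explicit
lower-order remainders `𝒞^{q+1}_i(Q)` and `𝒟^q_i(j,l,Q)`. -/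
theorem commutators_instead_of_expansion
    (U : Set (Fin 3 → ℝ)) (hU : IsOpen U) (hU0 : U ⊆ {(0 : Fin 3 → ℝ)}ᶜ)
    (Q : (Fin 3 → ℝ) → Matrix (Fin 3) (Fin 3) ℝ)
    (hQ : ∀ k i : Fin 3, ContDiffOn ℝ 2 (fun x => Q x k i) U)
    (q : ℝ) (hq : 0 < q)
    (W : (Fin 3 → ℝ) → ℝ) (hW : ContDiffOn ℝ 2 W U) (hWpos : ∀ x ∈ U, 0 < W x)
    (hWrad : ∀ x ∈ U, ∀ k : Fin 3, pdF k W x = (x k / rad x) * rdir W x) :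
    ∀ x ∈ U, ∀ i j l : Fin 3,
      (radF (fun y => W y ^ (-q) *
            ∑ k : Fin 3, pdF k (fun z => W z ^ (1 + q) * Q z k i) y) x
        = W x ^ (-(1 + q)) *
            (∑ k : Fin 3, pdF k
              (fun y => W y ^ (2 + q) * radF (fun z => Q z k i) y) x)
          + (rdir W x *
              ∑ l' : Fin 3, ∑ k : Fin 3, (x l' / rad x) * angF l' k (fun z => Q z k i) x
            - W x * ∑ k : Fin 3, pdF k (fun z => Q z k i) x
            + (1 + q) * ∑ k : Fin 3, Q x k i * radF (pdF k W) x)) ∧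
      (angF j l (fun y => W y ^ (-q) *
            ∑ k : Fin 3, pdF k (fun z => W z ^ (1 + q) * Q z k i) y) x
        = W x ^ (-q) *
            (∑ k : Fin 3, pdF k
              (fun y => W y ^ (1 + q) * angF j l (fun z => Q z k i) y) x)
          + (W x * ∑ k : Fin 3,
                (angF j l (pdF k (fun z => Q z k i)) x
                  - pdF k (angF j l (fun z => Q z k i)) x)
            + (1 + q) * ∑ k : Fin 3, Q x k i * angF j l (pdF k W) x
            + angF j l W x * ∑ k : Fin 3, pdF k (fun z => Q z k i) x)) :=
  commutators_instead_of_expansion_general U hU Q hQ q W hW hWpos hWrad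
end

section
/- For β > 0 and τ > 0 define: G₁(β,τ) = τ e^{−2τ} if 2σ₁(β) > 2+σ₂(β), τ² e^{−2τ} if 2σ₁(β) = 2+σ₂(β), and τ e^{(σ₂(β)−2σ₁(β))τ} if 2σ₁(β) < 2+σ₂(β); G₂(β,τ) = τ² e^{−2τ} if σ₁(β) = 2+σ₂(β) and τ e^{(σ₂(β)−σ₁(β))τ} if σ₁(β) < 2+σ₂(β); G₃(β,τ) = τ e^{−2τ} if 2β > 2+σ₂(β), τ² e^{−2τ} if 2β = 2+σ₂(β), and τ e^{(σ₂(β)−2β)τ} if 2β < 2+σ₂(β); G₄(β,τ) = τ e^{−2τ} if σ₁(β) > 1, τ² e^{−2τ} if σ₁(β) = 1, and τ e^{−2σ₁(β)τ} if σ₁(β) < 1; G₅(β,τ) = τ² e^{−2τ} if σ₁(β) = 2 and τ e^{−σ₁(β)τ} if σ₁(β) < 2; G₆(β,τ) = τ e^{−2τ} if β > 1, τ² e^{−2τ} if β = 1, and τ e^{−2βτ} if β < 1. For i = 1,…,6 define G̃_i(β,τ) = ∫₀^τ e^{σ₁(β)τ'/2} G_i(β,τ') dτ'. Then for every β > 0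 and every i ∈ {1,…,6}, the function τ ↦ e^{−σ₂(β)τ} G̃_i(β,τ) is bounded on (0,∞), and for every β > 2 it is integrable on (0,∞). -/
open MeasureTheory

/-- `σ₁(β) = β` for `β ≤ 2` and `= 2` for `β > 2`. -/
noncomputable def sigma1 (β : ℝ) : ℝ := if β ≤ 2 then β else 2

/-- `σ₂(β) = 0` for `β ≤ 2` and `= β − 2` for `β > 2`. -/
noncomputable def sigma2 (β : ℝ) : ℝ := if β ≤ 2 then 0 else β - 2

noncomputable def G1 (β τ : ℝ) : ℝ :=
  if 2 + sigma2 β < 2 * sigma1 β then τ * Real.exp (-2 * τ)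
  else if 2 * sigma1 β = 2 + sigma2 β then τ ^ 2 * Real.exp (-2 * τ)
  else τ * Real.exp ((sigma2 β - 2 * sigma1 β) * τ)

noncomputable def G2 (β τ : ℝ) : ℝ :=
  if sigma1 β = 2 + sigma2 β then τ ^ 2 * Real.exp (-2 * τ)
  else τ * Real.exp ((sigma2 β - sigma1 β) * τ)

noncomputable def G3 (β τ : ℝ) : ℝ :=
  if 2 + sigma2 β < 2 * β then τ * Real.exp (-2 * τ)
  else if 2 * β = 2 + sigma2 β then τ ^ 2 * Real.exp (-2 * τ)
  else τ * Real.exp ((sigma2 β - 2 * β) * τ)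

noncomputable def G4 (β τ : ℝ) : ℝ :=
  if 1 < sigma1 β then τ * Real.exp (-2 * τ)
  else if sigma1 β = 1 then τ ^ 2 * Real.exp (-2 * τ)
  else τ * Real.exp (-2 * sigma1 β * τ)

noncomputable def G5 (β τ : ℝ) : ℝ :=
  if sigma1 β = 2 then τ ^ 2 * Real.exp (-2 * τ)
  else τ * Real.exp (-(sigma1 β) * τ)

noncomputable def G6 (β τ : ℝ) : ℝ :=
  if 1 < β then τ * Real.exp (-2 * τ)
  else if β = 1 then τ ^ 2 * Real.exp (-2 * τ)
  else τ * Real.exp (-2 * β * τ)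

/-- The vector `(G₁, …, G₆)`. -/
noncomputable def Gvec : Fin 6 → ℝ → ℝ → ℝ := ![G1, G2, G3, G4, G5, G6]

/-- `G̃ᵢ(β,τ) = ∫₀^τ e^{σ₁(β)τ'/2} Gᵢ(β,τ') dτ'`. -/
noncomputable def Gtilde (i : Fin 6) (β τ : ℝ) : ℝ :=
  ∫ t in (0:ℝ)..τ, Real.exp (sigma1 β * t / 2) * Gvec i β t


/-!
Each integrand `e^{σ₁ t/2} Gᵢ(β,t)` has the form `t^k e^{a t}` with `a < σ₂`, which is a
linear inequality in `σ₁ ∈ (0,2]` and `σ₂ ≥ 0` in every case of the definitions.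
For `c ≥ 0` and `t ≤ τ` one has `e^{-cτ} e^{a t} ≤ e^{-(c-a)t}`, so
`e^{-cτ} ∫₀^τ t^k e^{a t} dt ≤ ∫₀^∞ t^k e^{-(c-a)t} dt = k!/(c-a)^{k+1}`.
When `c > 0`, the same bound for a slightly smaller `c' ∈ [0, c)` with `a < c'` leaves a spare
factor `e^{-(c-c')τ}`, which gives integrability.
-/

open MeasureTheory Real Set
open scoped Nat

lemma sigma1_pos {β : ℝ} (hβ : 0 < β) : 0 < sigma1 β := by
  unfold sigma1; split_ifs <;> linarith

lemma sigma1_le_two (β : ℝ) : sigma1 β ≤ 2 := by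
  unfold sigma1; split_ifs <;> linarith

lemma sigma2_nonneg (β : ℝ) : 0 ≤ sigma2 β := by
  unfold sigma2; split_ifs <;> linarith

lemma sigma2_pos {β : ℝ} (hβ : 2 < β) : 0 < sigma2 β := by
  unfold sigma2; split_ifs <;> linarith

lemma sigma1_add_sigma2 (β : ℝ) : sigma1 β + sigma2 β = β := by
  unfold sigma1 sigma2; split_ifs <;> ring

section PrimitiveBounds

variable (k : ℕ) {a c : ℝ}

lemma abs_exp_neg_mul_integral_pow_mul_exp_le (hc : 0 ≤ c) (hac : a < c) {τ : ℝ} (hτ : 0 ≤ τ) :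
    |exp (-c * τ) * ∫ t in (0:ℝ)..τ, t ^ k * exp (a * t)| ≤ k ! / (c - a) ^ (k + 1) := by
  have hnonneg : 0 ≤ ∫ t in (0:ℝ)..τ, t ^ k * exp (a * t) :=
    intervalIntegral.integral_nonneg hτ fun t ht => by have := ht.1; positivity
  rw [abs_of_nonneg (mul_nonneg (exp_pos _).le hnonneg), ← intervalIntegral.integral_const_mul]
  calc ∫ t in (0:ℝ)..τ, exp (-c * τ) * (t ^ k * exp (a * t))
      ≤ ∫ t in (0:ℝ)..τ, t ^ k * exp (-((c - a) * t)) := by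
        refine intervalIntegral.integral_mono_on hτ
          ((by fun_prop : Continuous _).intervalIntegrable _ _)
          ((by fun_prop : Continuous _).intervalIntegrable _ _) fun t ht => ?_
        have hexp : exp (-c * τ) * exp (a * t) ≤ exp (-((c - a) * t)) := by
          rw [← exp_add, exp_le_exp]
          nlinarith [ht.2]
        have ht₀ : 0 ≤ t := ht.1
        calc exp (-c * τ) * (t ^ k * exp (a * t)) = t ^ k * (exp (-c * τ) * exp (a * t)) := by
              ring
          _ ≤ t ^ k * exp (-((c - a) * t)) := by gcongr
    _ ≤ k ! / (c - a) ^ (k + 1) := intervalIntegral_pow_mul_exp_neg_le hτ (by linarith)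

lemma integrableOn_exp_neg_mul_integral_pow_mul_exp (hc : 0 < c) (hac : a < c) :
    IntegrableOn (fun τ => exp (-c * τ) * ∫ t in (0:ℝ)..τ, t ^ k * exp (a * t)) (Ioi 0) := by
  set c' := max ((a + c) / 2) 0
  have hc' : 0 ≤ c' := le_max_right _ _
  have hac' : a < c' := by linarith [le_max_left ((a + c) / 2) 0]
  have hc'c : c' < c := max_lt (by linarith) hc
  have hcont : Continuous fun τ => exp (-c * τ) * ∫ t in (0:ℝ)..τ, t ^ k * exp (a * t) :=
    (by fun_prop : Continuous fun τ : ℝ => exp (-c * τ)).mul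
      (intervalIntegral.continuous_primitive
        (fun u v => (by fun_prop : Continuous _).intervalIntegrable u v) 0)
  refine Integrable.mono' ((exp_neg_integrableOn_Ioi 0 (sub_pos.mpr hc'c)).const_mul
    (k ! / (c' - a) ^ (k + 1))) hcont.aestronglyMeasurable.restrict
    (ae_restrict_of_forall_mem measurableSet_Ioi fun τ hτ => ?_)
  have hsplit : exp (-c * τ) = exp (-(c - c') * τ) * exp (-c' * τ) := by
    rw [← exp_add]; ring_nf
  rw [norm_eq_abs, hsplit, mul_assoc, abs_mul, abs_of_pos (exp_pos _), mul_comm]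
  gcongr
  exact abs_exp_neg_mul_integral_pow_mul_exp_le k hc' hac' hτ.le

end PrimitiveBounds

lemma exists_Gvec_eq_pow_mul_exp {β : ℝ} (hβ : 0 < β) (i : Fin 6) :
    ∃ (k : ℕ) (b : ℝ), (∀ t, Gvec i β t = t ^ k * exp (b * t)) ∧ sigma1 β / 2 + b < sigma2 β := by
  have h₁ := sigma1_pos hβ
  have h₂ := sigma1_le_two β
  have h₃ := sigma2_nonneg β
  have h₄ := sigma1_add_sigma2 β
  fin_cases i <;> simp only [Gvec, Fin.reduceFinMk, Matrix.cons_val, G1, G2, G3, G4, G5, G6] <;>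
    split_ifs <;>
    first
    | refine ⟨1, _, fun t => by rw [pow_one], ?_⟩
    | refine ⟨2, _, fun t => rfl, ?_⟩
  all_goals linarith

lemma exists_Gtilde_eq_integral_pow_mul_exp {β : ℝ} (hβ : 0 < β) (i : Fin 6) :
    ∃ (k : ℕ) (a : ℝ), a < sigma2 β ∧
      Gtilde i β = fun τ => ∫ t in (0:ℝ)..τ, t ^ k * exp (a * t) := by
  obtain ⟨k, b, hG, hb⟩ := exists_Gvec_eq_pow_mul_exp hβ i
  refine ⟨k, sigma1 β / 2 + b, hb, funext fun τ => intervalIntegral.integral_congr fun t _ => ?_⟩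
  simp only [hG, mul_left_comm _ (t ^ k), ← exp_add]
  ring_nf

/-- **Boundedness and integrability of `e^{−σ₂τ} G̃ᵢ`**: for each `i = 1,…,6` these
functions of `τ` are bounded on `(0,∞)` for every `β > 0`, and integrable on `(0,∞)`
for every `β > 2`. -/
theorem Gtilde_bounded_and_integrable :
    (∀ β : ℝ, 0 < β → ∀ i : Fin 6,
      ∃ C : ℝ, ∀ τ ∈ Set.Ioi (0:ℝ), |Real.exp (-(sigma2 β) * τ) * Gtilde i β τ| ≤ C) ∧
    (∀ β : ℝ, 2 < β → ∀ i : Fin 6,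
      IntegrableOn (fun τ => Real.exp (-(sigma2 β) * τ) * Gtilde i β τ)
        (Set.Ioi 0) volume) := by
  refine ⟨fun β hβ i => ?_, fun β hβ i => ?_⟩
  · obtain ⟨k, a, ha, hG⟩ := exists_Gtilde_eq_integral_pow_mul_exp hβ i
    rw [hG]
    exact ⟨_, fun τ hτ => abs_exp_neg_mul_integral_pow_mul_exp_le k (sigma2_nonneg β) ha hτ.le⟩
  · obtain ⟨k, a, ha, hG⟩ := exists_Gtilde_eq_integral_pow_mul_exp (by linarith) i
    rw [hG]
    exact integrableOn_exp_neg_mul_integral_pow_mul_exp k (sigma2_pos hβ) ha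
end
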